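/- Suppose that W''₂₃ commutes with W'₁₃ (as holds in the quantum group setting, where the relevant legs lie in a von Neumann algebra and its commutant respectively). Then W''₁₃ W'₁₃ W''₂₃ W₂₃ = W'₁₂* W''₂₃ W'₂₃ W'₁₂ W'₂₃* W₂₃ as bounded operators on H⊗H⊗H. -/

import Mathlib

noncomputable section

/-!
Conjugating by the antiunitaries `J ⊗ J ⊗ J` and `J ⊗ J ⊗ Ĵ` of `H ⊗ H ⊗ H` carries the pentagon
equation of `W` to the pentagon equation `W'₁₂ W'₁₃ W'₂₃ = W'₂₃ W'₁₂` of `W'` and to the mixed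
pentagon equation `W'₁₂ W''₁₃ W''₂₃ = W''₂₃ W'₁₂`. Since `W'` is unitary, these give
`W'₁₂* W''₂₃ W'₂₃ W'₁₂ W'₂₃* = W'₁₂* W''₂₃ W'₁₂ W'₁₃ = W''₁₃ W''₂₃ W'₁₃`, and the commutation
hypothesis turns the right-hand side into `W''₁₃ W'₁₃ W''₂₃`.

The antiunitaries of the triple tensor product exist because `a ⊗ b ⊗ c ↦ Ja ⊗ Jb ⊗ Ĵc` conjugates
the Gram matrix of elementary tensors, so it extends from their dense span.
-/

open scoped ComplexConjugate InnerProductSpace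

section Antiunitary

variable {E F : Type*} [NormedAddCommGroup E] [InnerProductSpace ℂ E]
  [NormedAddCommGroup F] [InnerProductSpace ℂ F]

def LinearIsometryEquiv.ofConjInvolutive (f : E → E) (hadd : ∀ x y, f (x + y) = f x + f y)
    (hsmul : ∀ (c : ℂ) x, f (c • x) = conj c • f x) (hnorm : ∀ x, ‖f x‖ = ‖x‖)
    (hinv : ∀ x, f (f x) = x) : E ≃ₗᵢ⋆[ℂ] E :=
  .ofSurjective ⟨⟨⟨f, hadd⟩, hsmul⟩, hnorm⟩ (Function.Involutive.surjective hinv)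

@[simp]
theorem LinearIsometryEquiv.coe_ofConjInvolutive (f : E → E) (hadd hsmul hnorm hinv) :
    ⇑(LinearIsometryEquiv.ofConjInvolutive f hadd hsmul hnorm hinv) = f :=
  rfl

theorem LinearIsometry.re_inner_map_map_conj (K : E →ₗᵢ⋆[ℂ] F) (x y : E) :
    RCLike.re ⟪K x, K y⟫_ℂ = RCLike.re ⟪x, y⟫_ℂ := by
  simp only [re_inner_eq_norm_add_mul_self_sub_norm_mul_self_sub_norm_mul_self_div_two, ← map_add,
    LinearIsometry.norm_map]

theorem LinearIsometry.inner_map_map_conj (K : E →ₗᵢ⋆[ℂ] F) (x y : E) :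
    ⟪K x, K y⟫_ℂ = ⟪y, x⟫_ℂ := by
  have hre := K.re_inner_map_map_conj x y
  have him := K.re_inner_map_map_conj x (Complex.I • y)
  rw [LinearIsometry.map_smulₛₗ, inner_smul_right, inner_smul_right] at him
  simp only [Complex.conj_I, neg_mul, map_neg, RCLike.re_to_complex, Complex.I_mul_re,
    neg_neg] at him hre
  exact Complex.ext (by rw [hre, ← inner_conj_symm, Complex.conj_re])
    (by rw [him, ← inner_conj_symm, Complex.conj_im, neg_neg])

theorem LinearIsometryEquiv.inner_map_map_conj (K : E ≃ₗᵢ⋆[ℂ] F) (x y : E) :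
    ⟪K x, K y⟫_ℂ = ⟪y, x⟫_ℂ :=
  K.toLinearIsometry.inner_map_map_conj x y

def conjOp (K : E ≃ₗᵢ⋆[ℂ] E) : (E →L[ℂ] E) →* (E →L[ℂ] E) where
  toFun T := (K.toContinuousLinearEquiv : E →SL[starRingEnd ℂ] E).comp
    (T.comp (K.symm.toContinuousLinearEquiv : E →SL[starRingEnd ℂ] E))
  map_one' := by ext; simp
  map_mul' S T := by ext; simp

variable (K : E ≃ₗᵢ⋆[ℂ] E)

@[simp]
theorem conjOp_apply_map (T : E →L[ℂ] E) (x : E) : conjOp K T (K x) = K (T x) := by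
  simp [conjOp]

theorem conjOp_eq_iff {T S : E →L[ℂ] E} : conjOp K T = S ↔ ∀ x, S (K x) = K (T x) := by
  refine ⟨fun h x => by rw [← h, conjOp_apply_map], fun h => ?_⟩
  ext y
  obtain ⟨x, rfl⟩ := K.surjective y
  rw [conjOp_apply_map, h]

theorem conjOp_eq_of_dense {ι : Type*} {g : ι → E}
    (hg : Dense (Submodule.span ℂ (Set.range g) : Set E)) {T S : E →L[ℂ] E}
    (h : ∀ i, S (K (g i)) = K (T (g i))) : conjOp K T = S := by
  have hcomp : S.comp (K.toContinuousLinearEquiv : E →SL[starRingEnd ℂ] E) =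
      (K.toContinuousLinearEquiv : E →SL[starRingEnd ℂ] E).comp T :=
    ContinuousLinearMap.ext_on hg (by rintro _ ⟨i, rfl⟩; exact h i)
  exact (conjOp_eq_iff K).2 fun x => DFunLike.congr_fun hcomp x

theorem star_conjOp [CompleteSpace E] (T : E →L[ℂ] E) : star (conjOp K T) = conjOp K (star T) := by
  symm
  rw [ContinuousLinearMap.star_eq_adjoint, ContinuousLinearMap.star_eq_adjoint,
    ContinuousLinearMap.eq_adjoint_iff]
  intro x y
  obtain ⟨x, rfl⟩ := K.surjective x
  obtain ⟨y, rfl⟩ := K.surjective y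
  rw [conjOp_apply_map, conjOp_apply_map, K.inner_map_map_conj, K.inner_map_map_conj,
    ContinuousLinearMap.adjoint_inner_right]

theorem conjOp_mem_unitary [CompleteSpace E] {T : E →L[ℂ] E} (hT : T ∈ unitary (E →L[ℂ] E)) :
    conjOp K T ∈ unitary (E →L[ℂ] E) := by
  rw [Unitary.mem_iff, star_conjOp, ← map_mul, ← map_mul, Unitary.star_mul_self_of_mem hT,
    Unitary.mul_star_self_of_mem hT, map_one]
  exact ⟨rfl, rfl⟩

theorem ContinuousLinearMap.ext_inner_of_dense_span {ι : Type*} {g : ι → E}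
    (hg : Dense (Submodule.span ℂ (Set.range g) : Set E)) {A B : E →L[ℂ] E}
    (h : ∀ i j, ⟪g i, A (g j)⟫_ℂ = ⟪g i, B (g j)⟫_ℂ) : A = B := by
  refine ContinuousLinearMap.ext_on hg ?_
  rintro _ ⟨j, rfl⟩
  refine hg.eq_of_inner_right ℂ fun v hv => ?_
  induction hv using Submodule.span_induction with
  | mem v hv => obtain ⟨i, rfl⟩ := hv; exact h i j
  | zero => simp
  | add v w _ _ hv hw => rw [inner_add_left, inner_add_left, hv, hw]
  | smul c v _ hv => rw [inner_smul_left, inner_smul_left, hv]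

theorem exists_conjLinearIsometry_map_eq [CompleteSpace F] {ι : Type*} (g : ι → E) (t : ι → F)
    (hg : Dense (Submodule.span ℂ (Set.range g) : Set E))
    (ht : ∀ i j, ⟪t i, t j⟫_ℂ = ⟪g j, g i⟫_ℂ) : ∃ K : E →ₗᵢ⋆[ℂ] F, ∀ i, K (g i) = t i := by
  let L := Finsupp.linearCombination ℂ g
  -- `T` sends the coefficients of `∑ cᵢ gᵢ` to `∑ conj cᵢ tᵢ`; it is isometric with respect to
  -- `L`, so it descends to `span (range g)` and extends by continuity.
  let T : (ι →₀ ℂ) →ₛₗ[starRingEnd ℂ] F := (Finsupp.linearCombination ℂ t).comp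
    (Finsupp.mapRange.linearMap (starLinearEquiv ℂ : ℂ ≃ₗ⋆[ℂ] ℂ).toLinearMap)
  have hT : ∀ c, T c = c.sum fun i a => conj a • t i := fun c => by
    simp [T, Finsupp.linearCombination_apply, Finsupp.sum_mapRange_index]
  have hinner : ∀ c c', ⟪T c, T c'⟫_ℂ = ⟪L c', L c⟫_ℂ := fun c c' => by
    simp only [hT, L, Finsupp.linearCombination_apply, Finsupp.sum_inner, Finsupp.inner_sum,
      inner_smul_left, inner_smul_right, Complex.conj_conj, ht, Finsupp.mul_sum]
    rw [Finsupp.sum_comm]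
    exact Finsupp.sum_congr fun i _ => Finsupp.sum_congr fun j _ => by ring
  have hnorm : ∀ c, ‖T c‖ = ‖L c‖ := fun c => by
    rw [@norm_eq_sqrt_re_inner ℂ, @norm_eq_sqrt_re_inner ℂ, hinner]
  have hL : DenseRange L := by
    rw [DenseRange, ← LinearMap.coe_range, Finsupp.range_linearCombination]
    exact hg
  let K := T.extendOfNorm L
  have hK : ∀ c, K (L c) = T c :=
    LinearMap.extendOfNorm_eq hL ⟨1, fun c => (hnorm c).trans_le (one_mul _).symm.le⟩
  refine ⟨{ K.toLinearMap with norm_map' := fun x => ?_ }, fun i => ?_⟩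
  · refine hL.induction_on x (isClosed_eq (continuous_norm.comp K.continuous) continuous_norm) ?_
    intro c
    simp [hK, hnorm]
  · simpa [L, T] using hK (Finsupp.single i 1)

end Antiunitary

theorem pentagon_mixed_rearrange {M : Type*} [Monoid M] [StarMul M] {V₁₂ V₁₃ V₂₃ U₁₃ U₂₃ : M}
    (hV₁₂ : V₁₂ ∈ unitary M) (hV₂₃ : V₂₃ ∈ unitary M) (hV : V₁₂ * V₁₃ * V₂₃ = V₂₃ * V₁₂)
    (hUV : V₁₂ * U₁₃ * U₂₃ = U₂₃ * V₁₂) (hcomm : Commute U₂₃ V₁₃) :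
    U₁₃ * V₁₃ * U₂₃ = star V₁₂ * U₂₃ * V₂₃ * V₁₂ * star V₂₃ :=
  calc U₁₃ * V₁₃ * U₂₃ = U₁₃ * U₂₃ * V₁₃ := by rw [mul_assoc, ← hcomm.eq, ← mul_assoc]
    _ = star V₁₂ * (V₁₂ * U₁₃ * U₂₃) * V₁₃ := by
        rw [← mul_assoc (star V₁₂), ← mul_assoc (star V₁₂), Unitary.star_mul_self_of_mem hV₁₂,
          one_mul]
    _ = star V₁₂ * U₂₃ * (V₁₂ * V₁₃ * V₂₃ * star V₂₃) := by
        rw [hUV, mul_assoc _ V₂₃, Unitary.mul_star_self_of_mem hV₂₃, mul_one]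
        simp only [mul_assoc]
    _ = star V₁₂ * U₂₃ * V₂₃ * V₁₂ * star V₂₃ := by rw [hV]; simp only [mul_assoc]

section Legs

variable {H H2 H3 : Type*}
  [NormedAddCommGroup H] [InnerProductSpace ℂ H]
  [NormedAddCommGroup H2] [InnerProductSpace ℂ H2]
  [NormedAddCommGroup H3] [InnerProductSpace ℂ H3]
  {τ : H →L[ℂ] H →L[ℂ] H2} {m : H2 →L[ℂ] H →L[ℂ] H3} {m' : H →L[ℂ] H2 →L[ℂ] H3}
  {leg12 leg23 : (H2 →L[ℂ] H2) → (H3 →L[ℂ] H3)}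

theorem inner_m'_m' [CompleteSpace H2] [CompleteSpace H3]
    (hτinner : ∀ a b c d : H, ⟪τ a b, τ c d⟫_ℂ = ⟪a, c⟫_ℂ * ⟪b, d⟫_ℂ)
    (hτdense : Dense (Submodule.span ℂ (Set.range fun p : H × H => τ p.1 p.2) : Set H2))
    (hmm' : ∀ a b c : H, m (τ a b) c = m' a (τ b c))
    (hminner : ∀ (u v : H2) (c d : H), ⟪m u c, m v d⟫_ℂ = ⟪u, v⟫_ℂ * ⟪c, d⟫_ℂ)
    (a a' : H) (v v' : H2) : ⟪m' a v, m' a' v'⟫_ℂ = ⟪a, a'⟫_ℂ * ⟪v, v'⟫_ℂ := by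
  have hgram : (m' a).adjoint ∘L m' a' = ⟪a, a'⟫_ℂ • ContinuousLinearMap.id ℂ H2 := by
    refine ContinuousLinearMap.ext_inner_of_dense_span hτdense ?_
    rintro ⟨b, c⟩ ⟨b', c'⟩
    simp only [ContinuousLinearMap.comp_apply, ContinuousLinearMap.adjoint_inner_right, ← hmm',
      hminner, hτinner, smul_apply, ContinuousLinearMap.id_apply,
      inner_smul_right]
    ring
  rw [← ContinuousLinearMap.adjoint_inner_right, ← ContinuousLinearMap.comp_apply, hgram]
  simp [inner_smul_right]

theorem leg12_mul
    (hmdense : Dense (Submodule.span ℂ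
      (Set.range fun p : (H × H) × H => m (τ p.1.1 p.1.2) p.2) : Set H3))
    (hleg12 : ∀ (T : H2 →L[ℂ] H2) (u : H2) (c : H), leg12 T (m u c) = m (T u) c)
    (S T : H2 →L[ℂ] H2) : leg12 (S * T) = leg12 S * leg12 T :=
  ContinuousLinearMap.ext_on hmdense (by rintro _ ⟨⟨⟨a, b⟩, c⟩, rfl⟩; simp [hleg12])

theorem leg12_one
    (hmdense : Dense (Submodule.span ℂ
      (Set.range fun p : (H × H) × H => m (τ p.1.1 p.1.2) p.2) : Set H3))
    (hleg12 : ∀ (T : H2 →L[ℂ] H2) (u : H2) (c : H), leg12 T (m u c) = m (T u) c) :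
    leg12 1 = 1 :=
  ContinuousLinearMap.ext_on hmdense (by rintro _ ⟨⟨⟨a, b⟩, c⟩, rfl⟩; simp [hleg12])

theorem leg23_mul
    (hmdense : Dense (Submodule.span ℂ
      (Set.range fun p : (H × H) × H => m (τ p.1.1 p.1.2) p.2) : Set H3))
    (hmm' : ∀ a b c : H, m (τ a b) c = m' a (τ b c))
    (hleg23 : ∀ (T : H2 →L[ℂ] H2) (a : H) (v : H2), leg23 T (m' a v) = m' a (T v))
    (S T : H2 →L[ℂ] H2) : leg23 (S * T) = leg23 S * leg23 T :=
  ContinuousLinearMap.ext_on hmdense (by rintro _ ⟨⟨⟨a, b⟩, c⟩, rfl⟩; simp [hmm', hleg23])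

theorem leg23_one
    (hmdense : Dense (Submodule.span ℂ
      (Set.range fun p : (H × H) × H => m (τ p.1.1 p.1.2) p.2) : Set H3))
    (hmm' : ∀ a b c : H, m (τ a b) c = m' a (τ b c))
    (hleg23 : ∀ (T : H2 →L[ℂ] H2) (a : H) (v : H2), leg23 T (m' a v) = m' a (T v)) :
    leg23 1 = 1 :=
  ContinuousLinearMap.ext_on hmdense (by rintro _ ⟨⟨⟨a, b⟩, c⟩, rfl⟩; simp [hmm', hleg23])

theorem leg12_star [CompleteSpace H2] [CompleteSpace H3]
    (hminner : ∀ (u v : H2) (c d : H), ⟪m u c, m v d⟫_ℂ = ⟪u, v⟫_ℂ * ⟪c, d⟫_ℂ)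
    (hmdense : Dense (Submodule.span ℂ
      (Set.range fun p : (H × H) × H => m (τ p.1.1 p.1.2) p.2) : Set H3))
    (hleg12 : ∀ (T : H2 →L[ℂ] H2) (u : H2) (c : H), leg12 T (m u c) = m (T u) c)
    (T : H2 →L[ℂ] H2) : star (leg12 T) = leg12 (star T) := by
  refine ContinuousLinearMap.ext_inner_of_dense_span hmdense ?_
  rintro ⟨⟨a, b⟩, c⟩ ⟨⟨a', b'⟩, c'⟩
  simp only [ContinuousLinearMap.star_eq_adjoint, ContinuousLinearMap.adjoint_inner_right, hleg12,
    hminner]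

theorem leg23_star [CompleteSpace H2] [CompleteSpace H3]
    (hτinner : ∀ a b c d : H, ⟪τ a b, τ c d⟫_ℂ = ⟪a, c⟫_ℂ * ⟪b, d⟫_ℂ)
    (hτdense : Dense (Submodule.span ℂ (Set.range fun p : H × H => τ p.1 p.2) : Set H2))
    (hmm' : ∀ a b c : H, m (τ a b) c = m' a (τ b c))
    (hminner : ∀ (u v : H2) (c d : H), ⟪m u c, m v d⟫_ℂ = ⟪u, v⟫_ℂ * ⟪c, d⟫_ℂ)
    (hmdense : Dense (Submodule.span ℂ
      (Set.range fun p : (H × H) × H => m (τ p.1.1 p.1.2) p.2) : Set H3))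
    (hleg23 : ∀ (T : H2 →L[ℂ] H2) (a : H) (v : H2), leg23 T (m' a v) = m' a (T v))
    (T : H2 →L[ℂ] H2) : star (leg23 T) = leg23 (star T) := by
  refine ContinuousLinearMap.ext_inner_of_dense_span hmdense ?_
  rintro ⟨⟨a, b⟩, c⟩ ⟨⟨a', b'⟩, c'⟩
  simp only [ContinuousLinearMap.star_eq_adjoint, ContinuousLinearMap.adjoint_inner_right, hmm',
    hleg23, inner_m'_m' hτinner hτdense hmm' hminner]

theorem leg12_mem_unitary [CompleteSpace H2] [CompleteSpace H3]
    (hminner : ∀ (u v : H2) (c d : H), ⟪m u c, m v d⟫_ℂ = ⟪u, v⟫_ℂ * ⟪c, d⟫_ℂ)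
    (hmdense : Dense (Submodule.span ℂ
      (Set.range fun p : (H × H) × H => m (τ p.1.1 p.1.2) p.2) : Set H3))
    (hleg12 : ∀ (T : H2 →L[ℂ] H2) (u : H2) (c : H), leg12 T (m u c) = m (T u) c)
    {T : H2 →L[ℂ] H2} (hT : T ∈ unitary (H2 →L[ℂ] H2)) : leg12 T ∈ unitary (H3 →L[ℂ] H3) := by
  rw [Unitary.mem_iff, leg12_star hminner hmdense hleg12, ← leg12_mul hmdense hleg12,
    ← leg12_mul hmdense hleg12, Unitary.star_mul_self_of_mem hT, Unitary.mul_star_self_of_mem hT,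
    leg12_one hmdense hleg12]
  exact ⟨rfl, rfl⟩

theorem leg23_mem_unitary [CompleteSpace H2] [CompleteSpace H3]
    (hτinner : ∀ a b c d : H, ⟪τ a b, τ c d⟫_ℂ = ⟪a, c⟫_ℂ * ⟪b, d⟫_ℂ)
    (hτdense : Dense (Submodule.span ℂ (Set.range fun p : H × H => τ p.1 p.2) : Set H2))
    (hmm' : ∀ a b c : H, m (τ a b) c = m' a (τ b c))
    (hminner : ∀ (u v : H2) (c d : H), ⟪m u c, m v d⟫_ℂ = ⟪u, v⟫_ℂ * ⟪c, d⟫_ℂ)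
    (hmdense : Dense (Submodule.span ℂ
      (Set.range fun p : (H × H) × H => m (τ p.1.1 p.1.2) p.2) : Set H3))
    (hleg23 : ∀ (T : H2 →L[ℂ] H2) (a : H) (v : H2), leg23 T (m' a v) = m' a (T v))
    {T : H2 →L[ℂ] H2} (hT : T ∈ unitary (H2 →L[ℂ] H2)) : leg23 T ∈ unitary (H3 →L[ℂ] H3) := by
  rw [Unitary.mem_iff, leg23_star hτinner hτdense hmm' hminner hmdense hleg23,
    ← leg23_mul hmdense hmm' hleg23, ← leg23_mul hmdense hmm' hleg23,
    Unitary.star_mul_self_of_mem hT, Unitary.mul_star_self_of_mem hT, leg23_one hmdense hmm' hleg23]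
  exact ⟨rfl, rfl⟩

theorem exists_antiunitary_tensor [CompleteSpace H3]
    (hτinner : ∀ a b c d : H, ⟪τ a b, τ c d⟫_ℂ = ⟪a, c⟫_ℂ * ⟪b, d⟫_ℂ)
    (hminner : ∀ (u v : H2) (c d : H), ⟪m u c, m v d⟫_ℂ = ⟪u, v⟫_ℂ * ⟪c, d⟫_ℂ)
    (hmdense : Dense (Submodule.span ℂ
      (Set.range fun p : (H × H) × H => m (τ p.1.1 p.1.2) p.2) : Set H3))
    (A B C : H ≃ₗᵢ⋆[ℂ] H) (hA : Function.Involutive A) (hB : Function.Involutive B)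
    (hC : Function.Involutive C) :
    ∃ K : H3 ≃ₗᵢ⋆[ℂ] H3, ∀ a b c, K (m (τ a b) c) = m (τ (A a) (B b)) (C c) := by
  obtain ⟨K, hK⟩ := exists_conjLinearIsometry_map_eq (fun p : (H × H) × H => m (τ p.1.1 p.1.2) p.2)
    (fun p => m (τ (A p.1.1) (B p.1.2)) (C p.2)) hmdense fun ⟨⟨a, b⟩, c⟩ ⟨⟨a', b'⟩, c'⟩ => by
      simp only [hminner, hτinner, LinearIsometryEquiv.inner_map_map_conj]
  have hKK : (K.toContinuousLinearMap).comp K.toContinuousLinearMap = ContinuousLinearMap.id ℂ H3 :=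
    ContinuousLinearMap.ext_on hmdense (by
      rintro _ ⟨⟨⟨a, b⟩, c⟩, rfl⟩
      have h := hK ((A a, B b), C c)
      simp only [hA a, hB b, hC c] at h
      simp [hK ((a, b), c), h])
  have hinv : Function.Involutive K := fun x => DFunLike.congr_fun hKK x
  exact ⟨.ofSurjective K hinv.surjective, fun a b c => hK ((a, b), c)⟩

theorem antiunitary_apply_m
    (hτdense : Dense (Submodule.span ℂ (Set.range fun p : H × H => τ p.1 p.2) : Set H2))
    (K : H3 ≃ₗᵢ⋆[ℂ] H3) (K₂ : H2 ≃ₗᵢ⋆[ℂ] H2) {A B C : H → H}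
    (hK : ∀ a b c, K (m (τ a b) c) = m (τ (A a) (B b)) (C c))
    (hK₂ : ∀ a b, K₂ (τ a b) = τ (A a) (B b)) (u : H2) (c : H) : K (m u c) = m (K₂ u) (C c) := by
  have h : (K.toContinuousLinearEquiv : H3 →SL[starRingEnd ℂ] H3).comp (m.flip c) =
      (m.flip (C c)).comp (K₂.toContinuousLinearEquiv : H2 →SL[starRingEnd ℂ] H2) :=
    ContinuousLinearMap.ext_on hτdense (by rintro _ ⟨⟨a, b⟩, rfl⟩; simp [hK, hK₂])
  simpa using DFunLike.congr_fun h u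

theorem antiunitary_apply_m'
    (hτdense : Dense (Submodule.span ℂ (Set.range fun p : H × H => τ p.1 p.2) : Set H2))
    (hmm' : ∀ a b c : H, m (τ a b) c = m' a (τ b c))
    (K : H3 ≃ₗᵢ⋆[ℂ] H3) (K₂ : H2 ≃ₗᵢ⋆[ℂ] H2) {A B C : H → H}
    (hK : ∀ a b c, K (m (τ a b) c) = m (τ (A a) (B b)) (C c))
    (hK₂ : ∀ b c, K₂ (τ b c) = τ (B b) (C c)) (a : H) (v : H2) : K (m' a v) = m' (A a) (K₂ v) := by
  have h : (K.toContinuousLinearEquiv : H3 →SL[starRingEnd ℂ] H3).comp (m' a) =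
      (m' (A a)).comp (K₂.toContinuousLinearEquiv : H2 →SL[starRingEnd ℂ] H2) :=
    ContinuousLinearMap.ext_on hτdense (by rintro _ ⟨⟨b, c⟩, rfl⟩; simp [← hmm', hK, hK₂])
  simpa using DFunLike.congr_fun h v

theorem conjOp_leg12
    (hmdense : Dense (Submodule.span ℂ
      (Set.range fun p : (H × H) × H => m (τ p.1.1 p.1.2) p.2) : Set H3))
    (hleg12 : ∀ (T : H2 →L[ℂ] H2) (u : H2) (c : H), leg12 T (m u c) = m (T u) c)
    (K : H3 ≃ₗᵢ⋆[ℂ] H3) (K₂ : H2 ≃ₗᵢ⋆[ℂ] H2) {C : H → H}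
    (hK : ∀ u c, K (m u c) = m (K₂ u) (C c)) (T : H2 →L[ℂ] H2) :
    conjOp K (leg12 T) = leg12 (conjOp K₂ T) :=
  conjOp_eq_of_dense K hmdense fun _ => by simp only [hK, hleg12, conjOp_apply_map]

theorem conjOp_leg23
    (hmdense : Dense (Submodule.span ℂ
      (Set.range fun p : (H × H) × H => m (τ p.1.1 p.1.2) p.2) : Set H3))
    (hmm' : ∀ a b c : H, m (τ a b) c = m' a (τ b c))
    (hleg23 : ∀ (T : H2 →L[ℂ] H2) (a : H) (v : H2), leg23 T (m' a v) = m' a (T v))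
    (K : H3 ≃ₗᵢ⋆[ℂ] H3) (K₂ : H2 ≃ₗᵢ⋆[ℂ] H2) {A : H → H}
    (hK : ∀ a v, K (m' a v) = m' (A a) (K₂ v)) (T : H2 →L[ℂ] H2) :
    conjOp K (leg23 T) = leg23 (conjOp K₂ T) :=
  conjOp_eq_of_dense K hmdense fun _ => by simp only [hmm', hK, hleg23, conjOp_apply_map]

theorem pentagon_conjOp
    (hmdense : Dense (Submodule.span ℂ
      (Set.range fun p : (H × H) × H => m (τ p.1.1 p.1.2) p.2) : Set H3))
    (hmm' : ∀ a b c : H, m (τ a b) c = m' a (τ b c))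
    (hleg12 : ∀ (T : H2 →L[ℂ] H2) (u : H2) (c : H), leg12 T (m u c) = m (T u) c)
    (hleg23 : ∀ (T : H2 →L[ℂ] H2) (a : H) (v : H2), leg23 T (m' a v) = m' a (T v))
    {leg13 : (H2 →L[ℂ] H2) → (H3 →L[ℂ] H3)} {Sg : H2 →L[ℂ] H2}
    (hleg13 : ∀ T : H2 →L[ℂ] H2, leg13 T = leg12 Sg * leg23 T * leg12 Sg)
    (K : H3 ≃ₗᵢ⋆[ℂ] H3) (K₁₂ K₂₃ : H2 ≃ₗᵢ⋆[ℂ] H2) {A C : H → H}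
    (hK₁₂ : ∀ u c, K (m u c) = m (K₁₂ u) (C c)) (hK₂₃ : ∀ a v, K (m' a v) = m' (A a) (K₂₃ v))
    (hSg : conjOp K₁₂ Sg = Sg) {W : H2 →L[ℂ] H2}
    (hW : leg12 W * leg13 W * leg23 W = leg23 W * leg12 W) :
    leg12 (conjOp K₁₂ W) * leg13 (conjOp K₂₃ W) * leg23 (conjOp K₂₃ W) =
      leg23 (conjOp K₂₃ W) * leg12 (conjOp K₁₂ W) := by
  have h12 := conjOp_leg12 hmdense hleg12 K K₁₂ hK₁₂
  have h23 := conjOp_leg23 hmdense hmm' hleg23 K K₂₃ hK₂₃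
  have h13 : ∀ T, conjOp K (leg13 T) = leg13 (conjOp K₂₃ T) := fun T => by
    rw [hleg13, hleg13, map_mul, map_mul, h12, h23, hSg]
  simpa only [map_mul, h12, h13, h23] using congrArg (conjOp K) hW

end Legs

theorem stmt_8_general
    {H H2 H3 : Type*}
    [NormedAddCommGroup H] [InnerProductSpace ℂ H]
    [NormedAddCommGroup H2] [InnerProductSpace ℂ H2] [CompleteSpace H2]
    [NormedAddCommGroup H3] [InnerProductSpace ℂ H3] [CompleteSpace H3]
    -- the tensor map H × H → H ⊗ H = H2
    (τ : H →L[ℂ] H →L[ℂ] H2)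
    (hτinner : ∀ a b c d : H, (inner ℂ (τ a b) (τ c d) : ℂ) = (inner ℂ a c : ℂ) * (inner ℂ b d : ℂ))
    (hτdense : Dense (Submodule.span ℂ (Set.range fun p : H × H => τ p.1 p.2) : Set H2))
    -- the tensor maps (H ⊗ H) × H → H ⊗ H ⊗ H = H3 and H × (H ⊗ H) → H ⊗ H ⊗ H
    (m : H2 →L[ℂ] H →L[ℂ] H3)
    (m' : H →L[ℂ] H2 →L[ℂ] H3)
    (hmm' : ∀ a b c : H, m (τ a b) c = m' a (τ b c))
    (hminner : ∀ (u v : H2) (c d : H), (inner ℂ (m u c) (m v d) : ℂ) = (inner ℂ u v : ℂ) * (inner ℂ c d : ℂ))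
    (hmdense : Dense (Submodule.span ℂ (Set.range fun p : (H × H) × H => m (τ p.1.1 p.1.2) p.2) : Set H3))
    -- the leg maps T ↦ T₁₂ = T ⊗ 1, T ↦ T₂₃ = 1 ⊗ T, T ↦ T₁₃ = (Σ⊗1)(1⊗T)(Σ⊗1)
    (leg12 leg23 leg13 : (H2 →L[ℂ] H2) → (H3 →L[ℂ] H3))
    (hleg12 : ∀ (T : H2 →L[ℂ] H2) (u : H2) (c : H), leg12 T (m u c) = m (T u) c)
    (hleg23 : ∀ (T : H2 →L[ℂ] H2) (a : H) (v : H2), leg23 T (m' a v) = m' a (T v))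
    -- the flip unitary Σ on H ⊗ H
    (Sg : H2 →L[ℂ] H2)
    (hSg : ∀ a b : H, Sg (τ a b) = τ b a)
    (hleg13 : ∀ T : H2 →L[ℂ] H2, leg13 T = leg12 Sg * leg23 T * leg12 Sg)
    -- the multiplicative unitary W, satisfying the pentagonal equation
    (W : H2 →L[ℂ] H2)
    (hWl : W * star W = 1) (hWr : star W * W = 1)
    (hPent : leg12 W * leg13 W * leg23 W = leg23 W * leg12 W)
    -- J : a conjugate-linear isometric involution of H
    (J : H → H)
    (hJadd : ∀ x y : H, J (x + y) = J x + J y)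
    (hJsmul : ∀ (c : ℂ) (x : H), J (c • x) = (starRingEnd ℂ) c • J x)
    (hJnorm : ∀ x : H, ‖J x‖ = ‖x‖)
    (hJinv : ∀ x : H, J (J x) = x)
    -- Jh : a conjugate-linear isometric involution of H
    (Jh : H → H)
    (hJhadd : ∀ x y : H, Jh (x + y) = Jh x + Jh y)
    (hJhsmul : ∀ (c : ℂ) (x : H), Jh (c • x) = (starRingEnd ℂ) c • Jh x)
    (hJhnorm : ∀ x : H, ‖Jh x‖ = ‖x‖)
    (hJhinv : ∀ x : H, Jh (Jh x) = x)
    -- JJ : the conjugate-linear involution J⊗J of H ⊗ H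
    (JJ : H2 → H2)
    (hJJadd : ∀ x y : H2, JJ (x + y) = JJ x + JJ y)
    (hJJsmul : ∀ (c : ℂ) (x : H2), JJ (c • x) = (starRingEnd ℂ) c • JJ x)
    (hJJnorm : ∀ x : H2, ‖JJ x‖ = ‖x‖)
    (hJJinv : ∀ x : H2, JJ (JJ x) = x)
    (hJJtmul : ∀ a b : H, JJ (τ a b) = τ (J a) (J b))
    -- JJh : the conjugate-linear involution J⊗Ĵ of H ⊗ H
    (JJh : H2 → H2)
    (hJJhadd : ∀ x y : H2, JJh (x + y) = JJh x + JJh y)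
    (hJJhsmul : ∀ (c : ℂ) (x : H2), JJh (c • x) = (starRingEnd ℂ) c • JJh x)
    (hJJhnorm : ∀ x : H2, ‖JJh x‖ = ‖x‖)
    (hJJhinv : ∀ x : H2, JJh (JJh x) = x)
    (hJJhtmul : ∀ a b : H, JJh (τ a b) = τ (J a) (Jh b))
    -- W' = (J⊗J) W (J⊗J), the commutant multiplicative unitary
    (W' : H2 →L[ℂ] H2)
    (hW' : ∀ x : H2, W' x = JJ (W (JJ x)))
    -- W'' = (J⊗Ĵ) W (J⊗Ĵ) (in the quantum group setting, W'' = (W'ᵒᵖ)*)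
    (W'' : H2 →L[ℂ] H2)
    (hW'' : ∀ x : H2, W'' x = JJh (W (JJh x)))
    -- W''₂₃ commutes with W'₁₃
    (hcomm : Commute (leg23 W'') (leg13 W')) :
    leg13 W'' * leg13 W' * leg23 W'' * leg23 W =
      star (leg12 W') * leg23 W'' * leg23 W' * leg12 W' * star (leg23 W') * leg23 W := by
  let Jₐ := LinearIsometryEquiv.ofConjInvolutive J hJadd hJsmul hJnorm hJinv
  let Ĵₐ := LinearIsometryEquiv.ofConjInvolutive Jh hJhadd hJhsmul hJhnorm hJhinv
  let JJₐ := LinearIsometryEquiv.ofConjInvolutive JJ hJJadd hJJsmul hJJnorm hJJinv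
  let JĴₐ := LinearIsometryEquiv.ofConjInvolutive JJh hJJhadd hJJhsmul hJJhnorm hJJhinv
  have hW'conj : conjOp JJₐ W = W' := (conjOp_eq_iff JJₐ).2 fun x => by simp [JJₐ, hW', hJJinv]
  have hW''conj : conjOp JĴₐ W = W'' :=
    (conjOp_eq_iff JĴₐ).2 fun x => by simp [JĴₐ, hW'', hJJhinv]
  have hSgconj : conjOp JJₐ Sg = Sg :=
    conjOp_eq_of_dense JJₐ hτdense fun _ => by simp [JJₐ, hJJtmul, hSg]
  obtain ⟨K, hK⟩ := exists_antiunitary_tensor hτinner hminner hmdense Jₐ Jₐ Ĵₐ hJinv hJinv hJhinv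
  obtain ⟨K', hK'⟩ := exists_antiunitary_tensor hτinner hminner hmdense Jₐ Jₐ Jₐ hJinv hJinv hJinv
  have hmixed : leg12 W' * leg13 W'' * leg23 W'' = leg23 W'' * leg12 W' := by
    simpa only [hW'conj, hW''conj] using pentagon_conjOp hmdense hmm' hleg12 hleg23 hleg13 K JJₐ JĴₐ
      (antiunitary_apply_m hτdense K JJₐ hK hJJtmul)
      (antiunitary_apply_m' hτdense hmm' K JĴₐ hK hJJhtmul) hSgconj hPent
  have hpent' : leg12 W' * leg13 W' * leg23 W' = leg23 W' * leg12 W' := by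
    simpa only [hW'conj] using pentagon_conjOp hmdense hmm' hleg12 hleg23 hleg13 K' JJₐ JJₐ
      (antiunitary_apply_m hτdense K' JJₐ hK' hJJtmul)
      (antiunitary_apply_m' hτdense hmm' K' JJₐ hK' hJJtmul) hSgconj hPent
  have hW'U : W' ∈ unitary (H2 →L[ℂ] H2) := hW'conj ▸ conjOp_mem_unitary JJₐ ⟨hWr, hWl⟩
  rw [pentagon_mixed_rearrange (leg12_mem_unitary hminner hmdense hleg12 hW'U)
    (leg23_mem_unitary hτinner hτdense hmm' hminner hmdense hleg23 hW'U) hpent' hmixed hcomm]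

theorem stmt_8
    {H H2 H3 : Type*}
    [NormedAddCommGroup H] [InnerProductSpace ℂ H] [CompleteSpace H]
    [NormedAddCommGroup H2] [InnerProductSpace ℂ H2] [CompleteSpace H2]
    [NormedAddCommGroup H3] [InnerProductSpace ℂ H3] [CompleteSpace H3]
    -- the tensor map H × H → H ⊗ H = H2
    (τ : H →L[ℂ] H →L[ℂ] H2)
    (hτinner : ∀ a b c d : H, (inner ℂ (τ a b) (τ c d) : ℂ) = (inner ℂ a c : ℂ) * (inner ℂ b d : ℂ))
    (hτdense : Dense (Submodule.span ℂ (Set.range fun p : H × H => τ p.1 p.2) : Set H2))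
    -- the tensor maps (H ⊗ H) × H → H ⊗ H ⊗ H = H3 and H × (H ⊗ H) → H ⊗ H ⊗ H
    (m : H2 →L[ℂ] H →L[ℂ] H3)
    (m' : H →L[ℂ] H2 →L[ℂ] H3)
    (hmm' : ∀ a b c : H, m (τ a b) c = m' a (τ b c))
    (hminner : ∀ (u v : H2) (c d : H), (inner ℂ (m u c) (m v d) : ℂ) = (inner ℂ u v : ℂ) * (inner ℂ c d : ℂ))
    (hmdense : Dense (Submodule.span ℂ (Set.range fun p : (H × H) × H => m (τ p.1.1 p.1.2) p.2) : Set H3))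
    -- the leg maps T ↦ T₁₂ = T ⊗ 1, T ↦ T₂₃ = 1 ⊗ T, T ↦ T₁₃ = (Σ⊗1)(1⊗T)(Σ⊗1)
    (leg12 leg23 leg13 : (H2 →L[ℂ] H2) → (H3 →L[ℂ] H3))
    (hleg12 : ∀ (T : H2 →L[ℂ] H2) (u : H2) (c : H), leg12 T (m u c) = m (T u) c)
    (hleg23 : ∀ (T : H2 →L[ℂ] H2) (a : H) (v : H2), leg23 T (m' a v) = m' a (T v))
    -- the flip unitary Σ on H ⊗ H
    (Sg : H2 →L[ℂ] H2)
    (hSg : ∀ a b : H, Sg (τ a b) = τ b a)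
    (hleg13 : ∀ T : H2 →L[ℂ] H2, leg13 T = leg12 Sg * leg23 T * leg12 Sg)
    -- the multiplicative unitary W, satisfying the pentagonal equation
    (W : H2 →L[ℂ] H2)
    (hWl : W * star W = 1) (hWr : star W * W = 1)
    (hPent : leg12 W * leg13 W * leg23 W = leg23 W * leg12 W)
    -- J : a conjugate-linear isometric involution of H
    (J : H → H)
    (hJadd : ∀ x y : H, J (x + y) = J x + J y)
    (hJsmul : ∀ (c : ℂ) (x : H), J (c • x) = (starRingEnd ℂ) c • J x)
    (hJnorm : ∀ x : H, ‖J x‖ = ‖x‖)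
    (hJinv : ∀ x : H, J (J x) = x)
    -- Jh : a conjugate-linear isometric involution of H
    (Jh : H → H)
    (hJhadd : ∀ x y : H, Jh (x + y) = Jh x + Jh y)
    (hJhsmul : ∀ (c : ℂ) (x : H), Jh (c • x) = (starRingEnd ℂ) c • Jh x)
    (hJhnorm : ∀ x : H, ‖Jh x‖ = ‖x‖)
    (hJhinv : ∀ x : H, Jh (Jh x) = x)
    -- JJ : the conjugate-linear involution J⊗J of H ⊗ H
    (JJ : H2 → H2)
    (hJJadd : ∀ x y : H2, JJ (x + y) = JJ x + JJ y)
    (hJJsmul : ∀ (c : ℂ) (x : H2), JJ (c • x) = (starRingEnd ℂ) c • JJ x)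
    (hJJnorm : ∀ x : H2, ‖JJ x‖ = ‖x‖)
    (hJJinv : ∀ x : H2, JJ (JJ x) = x)
    (hJJtmul : ∀ a b : H, JJ (τ a b) = τ (J a) (J b))
    -- JJh : the conjugate-linear involution J⊗Ĵ of H ⊗ H
    (JJh : H2 → H2)
    (hJJhadd : ∀ x y : H2, JJh (x + y) = JJh x + JJh y)
    (hJJhsmul : ∀ (c : ℂ) (x : H2), JJh (c • x) = (starRingEnd ℂ) c • JJh x)
    (hJJhnorm : ∀ x : H2, ‖JJh x‖ = ‖x‖)
    (hJJhinv : ∀ x : H2, JJh (JJh x) = x)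
    (hJJhtmul : ∀ a b : H, JJh (τ a b) = τ (J a) (Jh b))
    -- JhJ : the conjugate-linear involution Ĵ⊗J of H ⊗ H
    (JhJ : H2 → H2)
    (hJhJadd : ∀ x y : H2, JhJ (x + y) = JhJ x + JhJ y)
    (hJhJsmul : ∀ (c : ℂ) (x : H2), JhJ (c • x) = (starRingEnd ℂ) c • JhJ x)
    (hJhJnorm : ∀ x : H2, ‖JhJ x‖ = ‖x‖)
    (hJhJinv : ∀ x : H2, JhJ (JhJ x) = x)
    (hJhJtmul : ∀ a b : H, JhJ (τ a b) = τ (Jh a) (J b))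
    -- the assumption W* = (Ĵ⊗J) W (Ĵ⊗J)
    (hWstar : ∀ x : H2, (star W) x = JhJ (W (JhJ x)))
    -- W' = (J⊗J) W (J⊗J), the commutant multiplicative unitary
    (W' : H2 →L[ℂ] H2)
    (hW' : ∀ x : H2, W' x = JJ (W (JJ x)))
    -- W'' = (J⊗Ĵ) W (J⊗Ĵ) (in the quantum group setting, W'' = (W'ᵒᵖ)*)
    (W'' : H2 →L[ℂ] H2)
    (hW'' : ∀ x : H2, W'' x = JJh (W (JJh x)))
    -- W''₂₃ commutes with W'₁₃
    (hcomm : Commute (leg23 W'') (leg13 W')) :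
    leg13 W'' * leg13 W' * leg23 W'' * leg23 W =
      star (leg12 W') * leg23 W'' * leg23 W' * leg12 W' * star (leg23 W') * leg23 W :=
  stmt_8_general τ hτinner hτdense m m' hmm' hminner hmdense leg12 leg23 leg13 hleg12 hleg23 Sg hSg
    hleg13 W hWl hWr hPent J hJadd hJsmul hJnorm hJinv Jh hJhadd hJhsmul hJhnorm hJhinv JJ hJJadd
    hJJsmul hJJnorm hJJinv hJJtmul JJh hJJhadd hJJhsmul hJJhnorm hJJhinv hJJhtmul W' hW' W'' hW''
    hcomm
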